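/- arXiv:math/0606567 — 4 statements merged into one kernel-verified Lean document; each statement's English description precedes it below -/
import Mathlib

section
/- Let a₁, b₁, c₁ be nonzero, pairwise distinct integers and a₂, b₂, c₂ be integers. Suppose there exist integers k₁, l₁, m₁, not all zero, such that k₁a₁ + l₁b₁ + m₁c₁ = 0, k₁a₂ + l₁b₂ + m₁c₂ = 0, k₁a₁² + l₁b₁² + m₁c₁² = 0, and k₁a₁a₂ + l₁b₁b₂ + m₁c₁c₂ = 0. Then there exist rational numbers r and s such that (a₁, a₂) = r·(b₁, b₂) = s·(c₁, c₂) (as vectors over ℚ). -/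
theorem stmt_0 (a₁ b₁ c₁ a₂ b₂ c₂ : ℤ)
    (ha : a₁ ≠ 0) (hb : b₁ ≠ 0) (hc : c₁ ≠ 0)
    (hab : a₁ ≠ b₁) (hbc : b₁ ≠ c₁) (hac : a₁ ≠ c₁)
    (k₁ l₁ m₁ : ℤ) (hne : ¬(k₁ = 0 ∧ l₁ = 0 ∧ m₁ = 0))
    (h1 : k₁ * a₁ + l₁ * b₁ + m₁ * c₁ = 0)
    (h2 : k₁ * a₂ + l₁ * b₂ + m₁ * c₂ = 0)
    (h3 : k₁ * a₁ ^ 2 + l₁ * b₁ ^ 2 + m₁ * c₁ ^ 2 = 0)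
    (h4 : k₁ * (a₁ * a₂) + l₁ * (b₁ * b₂) + m₁ * (c₁ * c₂) = 0) :
    ∃ r s : ℚ,
      ((a₁ : ℚ), (a₂ : ℚ)) = (r * (b₁ : ℚ), r * (b₂ : ℚ)) ∧
      ((a₁ : ℚ), (a₂ : ℚ)) = (s * (c₁ : ℚ), s * (c₂ : ℚ)) := by
  have hk : k₁ ≠ 0 := by
    intro hk0
    have e1 : m₁ * c₁ * (c₁ - b₁) = 0 := by
      linear_combination h3 - b₁ * h1 + (b₁ * a₁ - a₁ ^ 2) * hk0
    have hm : m₁ = 0 := by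
      rcases mul_eq_zero.1 e1 with h | h
      · rcases mul_eq_zero.1 h with h | h
        · exact h
        · exact absurd h hc
      · exact absurd (sub_eq_zero.1 h).symm hbc
    have hl : l₁ = 0 := by
      have : l₁ * b₁ = 0 := by linear_combination h1 - a₁ * hk0 - c₁ * hm
      rcases mul_eq_zero.1 this with h | h
      · exact h
      · exact absurd h hb
    exact hne ⟨hk0, hl, hm⟩
  -- key identities
  have key1 : a₁ * c₂ = a₂ * c₁ := by
    have e : k₁ * (a₁ - b₁) * (a₁ * c₂ - a₂ * c₁) = 0 := by
      linear_combination c₂ * h3 - b₁ * c₂ * h1 - c₁ * h4 + b₁ * c₁ * h2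
    rcases mul_eq_zero.1 e with h | h
    · rcases mul_eq_zero.1 h with h | h
      · exact absurd h hk
      · exact absurd (sub_eq_zero.1 h) hab
    · linarith [sub_eq_zero.1 h]
  have key2 : a₁ * b₂ = a₂ * b₁ := by
    have e : k₁ * (a₁ - c₁) * (a₁ * b₂ - a₂ * b₁) = 0 := by
      linear_combination b₂ * h3 - c₁ * b₂ * h1 - b₁ * h4 + c₁ * b₁ * h2
    rcases mul_eq_zero.1 e with h | h
    · rcases mul_eq_zero.1 h with h | h
      · exact absurd h hk
      · exact absurd (sub_eq_zero.1 h) hac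
    · linarith [sub_eq_zero.1 h]
  have hbq : (b₁ : ℚ) ≠ 0 := Int.cast_ne_zero.2 hb
  have hcq : (c₁ : ℚ) ≠ 0 := Int.cast_ne_zero.2 hc
  refine ⟨(a₁ : ℚ) / b₁, (a₁ : ℚ) / c₁, ?_, ?_⟩ <;>
    refine Prod.ext ?_ ?_ <;> field_simp <;> exact_mod_cast (by linarith : _)
end

section
/- The polynomial p(n) = (n² − 13)(n² − 17)(n² − 221) has a root modulo m for every positive integer m; that is, for every m ≥ 1 there exists an integer n with p(n) ≡ 0 (mod m). -/
/-!
For every prime `p`, one of `13`, `17`, `221` is a square in `ℤ_[p]`, so the polynomial has a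
`p`-adic root. For `p = 2` this is Hensel's lemma applied to `17 ≡ 1 (mod 8)`; for `p = 13`
and `p = 17` it is `17 ≡ 2² (mod 13)` and `13 ≡ 8² (mod 17)`; for every other odd `p`, if
neither `13` nor `17` is a square modulo `p` then their product `221` is, and Hensel's lemma
lifts the square root. Reducing a `p`-adic root gives a root modulo every `p ^ k`, and the
Chinese remainder theorem glues these into a root modulo any `m ≥ 1`.
-/

open Polynomial

theorem Polynomial.dvd_eval_of_dvd_sub {R : Type*} [CommRing R] {f : R[X]} {a x n : R}
    (hn : a ∣ n - x) (hx : a ∣ f.eval x) : a ∣ f.eval n :=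
  (dvd_sub_left hx).1 (hn.trans (sub_dvd_eval_sub n x f))

theorem Polynomial.exists_dvd_eval_mul_of_isCoprime {R : Type*} [CommRing R] {f : R[X]}
    {a b x y : R} (hab : IsCoprime a b) (hx : a ∣ f.eval x) (hy : b ∣ f.eval y) :
    ∃ n, a * b ∣ f.eval n := by
  have ⟨u, v, huv⟩ := hab
  refine ⟨x * (v * b) + y * (u * a), hab.mul_dvd (dvd_eval_of_dvd_sub ?_ hx)
    (dvd_eval_of_dvd_sub ?_ hy)⟩
  · exact ⟨u * (y - x), by linear_combination x * huv⟩
  · exact ⟨v * (x - y), by linear_combination y * huv⟩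

theorem Polynomial.exists_dvd_eval_of_forall_prime_pow {f : ℤ[X]}
    (h : ∀ p k : ℕ, p.Prime → ∃ n, (p : ℤ) ^ k ∣ f.eval n) {m : ℕ} (hm : m ≠ 0) :
    ∃ n, (m : ℤ) ∣ f.eval n := by
  induction m using Nat.recOnPrimeCoprime with
  | zero => exact absurd rfl hm
  | prime_pow p k hp => simpa using h p k hp
  | coprime a b ha hb hab iha ihb =>
    obtain ⟨x, hx⟩ := iha (by omega)
    obtain ⟨y, hy⟩ := ihb (by omega)
    simpa using exists_dvd_eval_mul_of_isCoprime (Nat.isCoprime_iff_coprime.2 hab) hx hy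

theorem FiniteField.isSquare_mul_of_not_isSquare {F : Type*} [Field F] [Fintype F] {a b : F}
    (ha : ¬IsSquare a) (hb : ¬IsSquare b) : IsSquare (a * b) := by
  classical
  have ha0 : a ≠ 0 := by rintro rfl; exact ha IsSquare.zero
  have hb0 : b ≠ 0 := by rintro rfl; exact hb IsSquare.zero
  rw [← quadraticChar_one_iff_isSquare (mul_ne_zero ha0 hb0), map_mul,
    quadraticChar_neg_one_iff_not_isSquare.2 ha, quadraticChar_neg_one_iff_not_isSquare.2 hb,
    neg_one_mul, neg_neg]

namespace PadicInt

variable {p : ℕ} [Fact p.Prime]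

theorem exists_dvd_eval_of_aeval_eq_zero {f : ℤ[X]} {z : ℤ_[p]} (hz : aeval z f = 0) (k : ℕ) :
    ∃ n : ℤ, (p : ℤ) ^ k ∣ f.eval n := by
  set y := toZModPow k z
  refine ⟨y.val, ?_⟩
  have hy : aeval y f = 0 := by
    simpa [hz] using aeval_algHom_apply (toZModPow k).toIntAlgHom z f
  have hcast := aeval_algebraMap_apply (ZMod (p ^ k)) ((y.val : ℕ) : ℤ) f
  rw [← Nat.cast_pow, ← ZMod.intCast_zmod_eq_zero_iff_dvd]
  simpa [hy] using hcast.symm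

theorem isSquare_of_norm_sq_sub_lt {a x : ℤ_[p]} (h : ‖x ^ 2 - a‖ < ‖2 * x‖ ^ 2) :
    IsSquare a := by
  obtain ⟨z, hz, -⟩ := hensels_lemma (F := X ^ 2 - C a) (a := x)
    (by simpa [one_add_one_eq_two] using h)
  exact ⟨z, by simp only [map_sub, map_pow, aeval_X, aeval_C] at hz; linear_combination -hz⟩

theorem isSquare_intCast_of_isSquare_zmod (hp : p ≠ 2) {a : ℤ} (ha : (a : ZMod p) ≠ 0)
    (hsq : IsSquare (a : ZMod p)) : IsSquare (a : ℤ_[p]) := by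
  obtain ⟨y, hy⟩ := hsq
  set x : ℤ := (y.val : ℤ)
  have hx : (x : ZMod p) = y := by simp [x]
  have h2x : ‖((2 * x : ℤ) : ℤ_[p])‖ = 1 := by
    refine le_antisymm (norm_le_one _) (not_lt.1 ?_)
    rw [norm_intCast_lt_one_iff, ← ZMod.intCast_zmod_eq_zero_iff_dvd]
    push_cast [hx]
    refine mul_ne_zero (Ring.two_ne_zero (by rwa [ZMod.ringChar_zmod_n])) ?_
    rintro rfl
    simp_all
  have hsub : ‖((x ^ 2 - a : ℤ) : ℤ_[p])‖ < 1 := by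
    rw [norm_intCast_lt_one_iff, ← ZMod.intCast_zmod_eq_zero_iff_dvd]
    push_cast [hx, hy]
    ring
  apply isSquare_of_norm_sq_sub_lt (x := x)
  push_cast at h2x hsub
  rwa [h2x, one_pow]

theorem isSquare_intCast_two_of_dvd {a : ℤ} (ha : 8 ∣ a - 1) : IsSquare (a : ℤ_[2]) := by
  apply isSquare_of_norm_sq_sub_lt (x := 1)
  have h8 : ‖((1 - a : ℤ) : ℤ_[2])‖ ≤ ((2 : ℕ) : ℝ) ^ (-(3 : ℕ) : ℤ) := by
    rw [norm_int_le_pow_iff_dvd, ← dvd_neg]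
    simpa using ha
  have h2 : ‖(2 : ℤ_[2])‖ = 2⁻¹ := by simpa using norm_p (p := 2)
  push_cast at h8
  rw [mul_one, h2, one_pow]
  exact h8.trans_lt (by norm_num)

theorem isSquare_13_or_isSquare_17_or_isSquare_221 :
    IsSquare (13 : ℤ_[p]) ∨ IsSquare (17 : ℤ_[p]) ∨ IsSquare (221 : ℤ_[p]) := by
  suffices IsSquare ((13 : ℤ) : ℤ_[p]) ∨ IsSquare ((17 : ℤ) : ℤ_[p]) ∨
      IsSquare ((221 : ℤ) : ℤ_[p]) by
    simpa using this
  have ne_zero (q : ℕ) (hq : q.Prime) (hpq : p ≠ q) : ((q : ℤ) : ZMod p) ≠ 0 := by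
    rw [Ne, ZMod.intCast_zmod_eq_zero_iff_dvd, Int.natCast_dvd_natCast,
      Nat.prime_dvd_prime_iff_eq Fact.out hq]
    exact hpq
  by_cases hp2 : p = 2
  · subst hp2
    exact Or.inr (Or.inl (isSquare_intCast_two_of_dvd (by norm_num)))
  by_cases hp13 : p = 13
  · subst hp13
    exact Or.inr (Or.inl (isSquare_intCast_of_isSquare_zmod hp2
      (ne_zero 17 (by norm_num) (by norm_num)) ⟨2, rfl⟩))
  by_cases hp17 : p = 17
  · subst hp17
    exact Or.inl (isSquare_intCast_of_isSquare_zmod hp2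
      (ne_zero 13 (by norm_num) (by norm_num)) ⟨8, rfl⟩)
  have h13 : ((13 : ℤ) : ZMod p) ≠ 0 := ne_zero 13 (by norm_num) hp13
  have h17 : ((17 : ℤ) : ZMod p) ≠ 0 := ne_zero 17 (by norm_num) hp17
  by_cases hs13 : IsSquare ((13 : ℤ) : ZMod p)
  · exact Or.inl (isSquare_intCast_of_isSquare_zmod hp2 h13 hs13)
  by_cases hs17 : IsSquare ((17 : ℤ) : ZMod p)
  · exact Or.inr (Or.inl (isSquare_intCast_of_isSquare_zmod hp2 h17 hs17))
  have h221 : ((221 : ℤ) : ZMod p) = (13 : ℤ) * (17 : ℤ) := by push_cast; norm_num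
  refine Or.inr (Or.inr (isSquare_intCast_of_isSquare_zmod hp2 ?_ ?_)) <;> rw [h221]
  · exact mul_ne_zero h13 h17
  · exact FiniteField.isSquare_mul_of_not_isSquare hs13 hs17

end PadicInt

theorem stmt_4 : ∀ m : ℕ, 1 ≤ m → ∃ n : ℤ,
    (m : ℤ) ∣ (n ^ 2 - 13) * (n ^ 2 - 17) * (n ^ 2 - 221) := by
  intro m hm
  have hlocal (p k : ℕ) (hp : p.Prime) : ∃ n : ℤ,
      (p : ℤ) ^ k ∣ ((X ^ 2 - 13) * (X ^ 2 - 17) * (X ^ 2 - 221) : ℤ[X]).eval n := by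
    have := Fact.mk hp
    obtain ⟨z, hz⟩ | ⟨z, hz⟩ | ⟨z, hz⟩ :=
        PadicInt.isSquare_13_or_isSquare_17_or_isSquare_221 (p := p) <;>
      exact PadicInt.exists_dvd_eval_of_aeval_eq_zero (z := z) (by simp [sq, ← hz, map_ofNat]) k
  simpa using exists_dvd_eval_of_forall_prime_pow hlocal (by omega : m ≠ 0)
end

section
/- Let G be a divisible abelian group (written additively) and let l, m be integers with l ≠ m and l + m ≠ 0. Then the set {(g, g + l·g₁ + C(l,2)·g₂, g + m·g₁ + C(m,2)·g₂, g + (l+m)·g₁ + C(l+m,2)·g₂) : g, g₁, g₂ ∈ G} is contained in the set {(h₁, h₂, h₃, h₄) ∈ G⁴ : (m−l)·h₁ + (l+m)·h₃ = (m−l)·h₄ + (l+m)·h₂}. -/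
theorem stmt_13 {G : Type*} [AddCommGroup G]
    (hdiv : ∀ (n : ℤ) (g : G), n ≠ 0 → ∃ h : G, n • h = g)
    (l m : ℤ) (hlm : l ≠ m) (hlm' : l + m ≠ 0) :
    {q : G × G × G × G | ∃ g g₁ g₂ : G,
        q = (g,
             g + l • g₁ + (l * (l - 1) / 2) • g₂,
             g + m • g₁ + (m * (m - 1) / 2) • g₂,
             g + (l + m) • g₁ + ((l + m) * (l + m - 1) / 2) • g₂)} ⊆
    {q : G × G × G × G |
        (m - l) • q.1 + (l + m) • q.2.2.1 = (m - l) • q.2.2.2 + (l + m) • q.2.1} := by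
  rintro q ⟨g, g₁, g₂, rfl⟩
  simp only [Set.mem_setOf_eq]
  obtain ⟨k1, hk1⟩ : ∃ k : ℤ, l * (l - 1) = 2 * k := by
    rcases Int.even_mul_pred_self l with ⟨k, hk⟩; exact ⟨k, by omega⟩
  obtain ⟨k2, hk2⟩ : ∃ k : ℤ, m * (m - 1) = 2 * k := by
    rcases Int.even_mul_pred_self m with ⟨k, hk⟩; exact ⟨k, by omega⟩
  obtain ⟨k3, hk3⟩ : ∃ k : ℤ, (l + m) * (l + m - 1) = 2 * k := by
    rcases Int.even_mul_pred_self (l + m) with ⟨k, hk⟩; exact ⟨k, by omega⟩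
  have e1 : l * (l - 1) / 2 = k1 := by omega
  have e2 : m * (m - 1) / 2 = k2 := by omega
  have e3 : (l + m) * (l + m - 1) / 2 = k3 := by omega
  have key : (l + m) * k2 = (m - l) * k3 + (l + m) * k1 := by
    have h2 : (2 : ℤ) * ((l + m) * k2) = 2 * ((m - l) * k3 + (l + m) * k1) := by
      linear_combination (m - l) * hk3 + (l + m) * hk1 - (l + m) * hk2
    omega
  rw [e1, e2, e3]
  match_scalars
  · ring
  · ring
  · linear_combination key
end

section
/- Let N be a positive integer and let Λ ⊂ {1, …, N} be a set containing no solution (j₁, j₂, j₃, j₄) of j₁ + 8j₃ = 6j₂ + 3j₄ with j₁, j₂, j₃, j₄ pairwise distinct. For j ∈ Λ let I_j = [j/(9N), j/(9N) + 1/(81N)) ⊂ ℝ, and let B = ⋃_{j ∈ Λ} I_j. If x, y, z, w ∈ B satisfy x + 8z = 6y + 3w, then at least two of x, y, z, w lie in the same interval I_j for some j ∈ Λ. -/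
theorem stmt_15 (N : ℕ) (hN : 1 ≤ N) (Λ : Finset ℕ) (hΛ : Λ ⊆ Finset.Icc 1 N)
    (hsol : ∀ j₁ ∈ Λ, ∀ j₂ ∈ Λ, ∀ j₃ ∈ Λ, ∀ j₄ ∈ Λ,
      j₁ ≠ j₂ → j₁ ≠ j₃ → j₁ ≠ j₄ → j₂ ≠ j₃ → j₂ ≠ j₄ → j₃ ≠ j₄ →
      j₁ + 8 * j₃ ≠ 6 * j₂ + 3 * j₄)
    (I : ℕ → Set ℝ)
    (hI : ∀ j, I j = Set.Ico ((j : ℝ) / (9 * N)) ((j : ℝ) / (9 * N) + 1 / (81 * N)))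
    (B : Set ℝ) (hB : B = ⋃ j ∈ Λ, I j)
    (x y z w : ℝ) (hx : x ∈ B) (hy : y ∈ B) (hz : z ∈ B) (hw : w ∈ B)
    (heq : x + 8 * z = 6 * y + 3 * w) :
    ∃ j ∈ Λ,
      (x ∈ I j ∧ y ∈ I j) ∨ (x ∈ I j ∧ z ∈ I j) ∨ (x ∈ I j ∧ w ∈ I j) ∨
      (y ∈ I j ∧ z ∈ I j) ∨ (y ∈ I j ∧ w ∈ I j) ∨ (z ∈ I j ∧ w ∈ I j) := by
  subst hB
  simp only [Set.mem_iUnion] at hx hy hz hw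
  obtain ⟨j1, hj1, hx1⟩ := hx
  obtain ⟨j2, hj2, hy2⟩ := hy
  obtain ⟨j3, hj3, hz3⟩ := hz
  obtain ⟨j4, hj4, hw4⟩ := hw
  by_cases h12 : j1 = j2
  · exact ⟨j1, hj1, Or.inl ⟨hx1, h12 ▸ hy2⟩⟩
  by_cases h13 : j1 = j3
  · exact ⟨j1, hj1, Or.inr (Or.inl ⟨hx1, h13 ▸ hz3⟩)⟩
  by_cases h14 : j1 = j4
  · exact ⟨j1, hj1, Or.inr (Or.inr (Or.inl ⟨hx1, h14 ▸ hw4⟩))⟩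
  by_cases h23 : j2 = j3
  · exact ⟨j2, hj2, Or.inr (Or.inr (Or.inr (Or.inl ⟨hy2, h23 ▸ hz3⟩)))⟩
  by_cases h24 : j2 = j4
  · exact ⟨j2, hj2, Or.inr (Or.inr (Or.inr (Or.inr (Or.inl ⟨hy2, h24 ▸ hw4⟩))))⟩
  by_cases h34 : j3 = j4
  · exact ⟨j3, hj3, Or.inr (Or.inr (Or.inr (Or.inr (Or.inr ⟨hz3, h34 ▸ hw4⟩))))⟩
  exfalso
  rw [hI] at hx1 hy2 hz3 hw4
  obtain ⟨ha1, hb1⟩ := hx1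
  obtain ⟨ha2, hb2⟩ := hy2
  obtain ⟨ha3, hb3⟩ := hz3
  obtain ⟨ha4, hb4⟩ := hw4
  have hNpos : (0:ℝ) < (N:ℝ) := by exact_mod_cast hN
  have h9 : (0:ℝ) < 9 * N := by linarith
  have h81 : (0:ℝ) < 81 * N := by linarith
  have heqm : x * (9*(N:ℝ)) + 8 * (z * (9*N)) = 6 * (y * (9*N)) + 3 * (w * (9*N)) := by
    linear_combination (9*(N:ℝ)) * heq
  have e1 : (j1:ℝ) ≤ x * (9*N) := (div_le_iff₀ h9).mp ha1
  have e2 : (j2:ℝ) ≤ y * (9*N) := (div_le_iff₀ h9).mp ha2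
  have e3 : (j3:ℝ) ≤ z * (9*N) := (div_le_iff₀ h9).mp ha3
  have e4 : (j4:ℝ) ≤ w * (9*N) := (div_le_iff₀ h9).mp ha4
  have key : ∀ u : ℝ, ∀ j : ℕ, u < (j:ℝ)/(9*N) + 1/(81*N) → u * (9*N) < j + 1/9 := by
    intro u j h
    have := mul_lt_mul_of_pos_right h h9
    calc u * (9*N) < ((j:ℝ)/(9*N) + 1/(81*N)) * (9*N) := this
      _ = (j:ℝ) + 1/9 := by field_simp; ring
  have f1 := key x j1 hb1
  have f2 := key y j2 hb2
  have f3 := key z j3 hb3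
  have f4 := key w j4 hb4
  have habs : |((j1:ℝ) + 8 * j3) - (6 * j2 + 3 * j4)| < 1 := by
    rw [abs_lt]; constructor <;> linarith
  have hz0 : ((j1:ℤ) + 8 * j3) - (6 * j2 + 3 * j4) = 0 := by
    have h2 : |((j1:ℤ) + 8 * j3) - (6 * j2 + 3 * j4)| < 1 := by
      exact_mod_cast (by push_cast; exact habs : |(((j1:ℤ) + 8 * j3) - (6 * j2 + 3 * j4) : ℝ)| < 1)
    rw [abs_lt] at h2
    omega
  exact hsol j1 hj1 j2 hj2 j3 hj3 j4 hj4 h12 h13 h14 h23 h24 h34 (by omega)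
end
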